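/- The StaticallyInParallel adverb theory—generated by congruence for LiftA2, the left and right identity applicative laws, the commutativity rule (LiftA2 f a b ≅ LiftA2 (flip f) b a), and equivalence closure—is sound with respect to interpretation into the powerset transformer of any lawful applicative functor: d1 ≅ d2 implies interpPowerSet d1 EqPowerSet interpPowerSet d2. -/
import Mathlib


inductive ReifiedApp (E : Type → Type) : Type → Type 1 where
  | EmbedA {R : Type} (e : E R) : ReifiedApp E R
  | Pure {R : Type} (r : R) : ReifiedApp E R
  | LiftA2 {X Y R : Type} (f : X → Y → R) (a : ReifiedApp E X) (b : ReifiedApp E Y) :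
      ReifiedApp E R

/-- The adverb theory of `StaticallyInParallel`: congruence, left and right
identity, commutativity, and equivalence closure. -/
inductive ParEq (E : Type → Type) : ∀ {R : Type}, ReifiedApp E R → ReifiedApp E R → Prop where
  | congruence {X Y R : Type} (f : X → Y → R)
      {a1 a2 : ReifiedApp E X} {b1 b2 : ReifiedApp E Y} :
      ParEq E a1 a2 → ParEq E b1 b2 →
      ParEq E (.LiftA2 f a1 b1) (.LiftA2 f a2 b2)
  | left_id {A B : Type} (a : A) (f : A → B → B) (b : ReifiedApp E B) :
      (∀ y, (fun _ x => x) a y = f a y) →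
      ParEq E (.LiftA2 f (.Pure a) b) b
  | right_id {A B : Type} (b : B) (f : A → B → A) (a : ReifiedApp E A) :
      (∀ x, (fun x _ => x) x b = f x b) →
      ParEq E (.LiftA2 f a (.Pure b)) a
  | comm {A B C : Type} (f : A → B → C) (a : ReifiedApp E A) (b : ReifiedApp E B) :
      ParEq E (.LiftA2 f a b) (.LiftA2 (flip f) b a)
  | refl {R : Type} (a : ReifiedApp E R) : ParEq E a a
  | symm {R : Type} {a b : ReifiedApp E R} : ParEq E a b → ParEq E b a
  | trans {R : Type} {a b c : ReifiedApp E R} : ParEq E a b → ParEq E b c → ParEq E a c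

def PowerSet (I : Type → Type) (A : Type) := I A → Prop

def EqPowerSet {I : Type → Type} {A : Type} (p q : PowerSet I A) : Prop :=
  ∀ x, p x ↔ q x

section
variable {E I : Type → Type}
variable (pure : ∀ {A : Type}, A → I A)
variable (liftA2 : ∀ {A B C : Type}, (A → B → C) → I A → I B → I C)
variable (Equiv : ∀ {A : Type}, I A → I A → Prop)

def embedPowerSet {A : Type} (a : I A) : PowerSet I A := fun r => Equiv r a

def purePowerSet {A : Type} (a : A) : PowerSet I A := fun r => Equiv r (pure a)

def liftA2PowerSet {A B C : Type} (f : A → B → C)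
    (a : PowerSet I A) (b : PowerSet I B) : PowerSet I C :=
  fun r => ∃ a', a a' ∧ ∃ b', b b' ∧
    (Equiv (liftA2 f a' b') r ∨ Equiv (liftA2 (flip f) b' a') r)

def interpPowerSet (interpE : ∀ {A : Type}, E A → I A) :
    ∀ {R : Type}, ReifiedApp E R → PowerSet I R
  | _, .EmbedA e => embedPowerSet Equiv (interpE e)
  | _, .Pure r => purePowerSet pure Equiv r
  | _, .LiftA2 f a b =>
      liftA2PowerSet liftA2 Equiv f
        (interpPowerSet interpE a) (interpPowerSet interpE b)

theorem interp_respects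
    (equiv : ∀ {A : Type}, Equivalence (@Equiv A))
    (interpE : ∀ {A : Type}, E A → I A)
    {R : Type} (d : ReifiedApp E R) {r r' : I R} (h : Equiv r r') :
    interpPowerSet pure liftA2 Equiv interpE d r ↔
    interpPowerSet pure liftA2 Equiv interpE d r' := by
  cases d with
  | EmbedA e =>
    exact ⟨fun h1 => equiv.trans (equiv.symm h) h1, fun h1 => equiv.trans h h1⟩
  | Pure a =>
    exact ⟨fun h1 => equiv.trans (equiv.symm h) h1, fun h1 => equiv.trans h h1⟩
  | LiftA2 f a b =>
    constructor
    · rintro ⟨a', ha, b', hb, hc | hc⟩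
      · exact ⟨a', ha, b', hb, Or.inl (equiv.trans hc h)⟩
      · exact ⟨a', ha, b', hb, Or.inr (equiv.trans hc h)⟩
    · rintro ⟨a', ha, b', hb, hc | hc⟩
      · exact ⟨a', ha, b', hb, Or.inl (equiv.trans hc (equiv.symm h))⟩
      · exact ⟨a', ha, b', hb, Or.inr (equiv.trans hc (equiv.symm h))⟩

/-- Soundness of the `StaticallyInParallel` adverb with respect to
interpretation into the powerset transformer of any lawful applicative
functor. -/
theorem staticallyInParallel_sound
    (equiv : ∀ {A : Type}, Equivalence (@Equiv A))
    (congruence : ∀ {X Y R : Type} (f : X → Y → R) (a1 a2 : I X) (b1 b2 : I Y),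
      Equiv a1 a2 → Equiv b1 b2 → Equiv (liftA2 f a1 b1) (liftA2 f a2 b2))
    (left_id : ∀ {A B : Type} (a : A) (f : A → B → B) (b : I B),
      (∀ y, (fun _ x => x) a y = f a y) → Equiv (liftA2 f (pure a) b) b)
    (right_id : ∀ {A B : Type} (b : B) (f : A → B → A) (a : I A),
      (∀ x, (fun x _ => x) x b = f x b) → Equiv (liftA2 f a (pure b)) a)
    (assoc : ∀ {A B C R : Type} (f : A → B → C → R) (g : B → C → A → R)
      (a : I A) (b : I B) (c : I C),
      (∀ x y z, f x y z = g y z x) →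
      Equiv (liftA2 (fun h z => h z) (liftA2 f a b) c)
            (liftA2 (fun x h => h x) a (liftA2 g b c)))
    (naturality : ∀ {A B C X Y R : Type} (q : A → B → X) (p : X → C → R)
      (g : B → C → Y) (f : A → Y → R) (a : I A) (b : I B) (c : I C),
      (∀ x y z, p (q x y) z = f x (g y z)) →
      Equiv (liftA2 p (liftA2 q a b) c) (liftA2 f a (liftA2 g b c)))
    (interpE : ∀ {A : Type}, E A → I A)
    {R : Type} (d1 d2 : ReifiedApp E R) :
    ParEq E d1 d2 →
    EqPowerSet (interpPowerSet pure liftA2 Equiv interpE d1)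
               (interpPowerSet pure liftA2 Equiv interpE d2) := by
  intro hpe
  induction hpe with
  | @congruence X Y R' f a1 a2 b1 b2 h1 h2 ih1 ih2 =>
    intro r
    constructor
    · rintro ⟨a', ha, b', hb, hc⟩
      exact ⟨a', (ih1 a').mp ha, b', (ih2 b').mp hb, hc⟩
    · rintro ⟨a', ha, b', hb, hc⟩
      exact ⟨a', (ih1 a').mpr ha, b', (ih2 b').mpr hb, hc⟩
  | @left_id A B a f b hf =>
    intro r
    constructor
    · rintro ⟨a', ha, b', hb, hc | hc⟩
      · have h1 : Equiv (liftA2 f a' b') (liftA2 f (pure a) b') :=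
          congruence f _ _ _ _ ha (equiv.refl _)
        have h2 := left_id a f b' hf
        have hbr : Equiv b' r :=
          equiv.trans (equiv.symm h2) (equiv.trans (equiv.symm h1) hc)
        exact (interp_respects pure liftA2 Equiv equiv interpE b hbr).mp hb
      · have h1 : Equiv (liftA2 (flip f) b' a') (liftA2 (flip f) b' (pure a)) :=
          congruence (flip f) _ _ _ _ (equiv.refl _) ha
        have h2 := right_id a (flip f) b' (fun x => hf x)
        have hbr : Equiv b' r :=
          equiv.trans (equiv.symm h2) (equiv.trans (equiv.symm h1) hc)
        exact (interp_respects pure liftA2 Equiv equiv interpE b hbr).mp hb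
    · intro hb
      exact ⟨pure a, equiv.refl _, r, hb, Or.inl (left_id a f r hf)⟩
  | @right_id A B b f a hf =>
    intro r
    constructor
    · rintro ⟨a', ha, b', hb, hc | hc⟩
      · have h1 : Equiv (liftA2 f a' b') (liftA2 f a' (pure b)) :=
          congruence f _ _ _ _ (equiv.refl _) hb
        have h2 := right_id b f a' hf
        have har : Equiv a' r :=
          equiv.trans (equiv.symm h2) (equiv.trans (equiv.symm h1) hc)
        exact (interp_respects pure liftA2 Equiv equiv interpE a har).mp ha
      · have h1 : Equiv (liftA2 (flip f) b' a') (liftA2 (flip f) (pure b) a') :=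
          congruence (flip f) _ _ _ _ hb (equiv.refl _)
        have h2 := left_id b (flip f) a' (fun x => hf x)
        have har : Equiv a' r :=
          equiv.trans (equiv.symm h2) (equiv.trans (equiv.symm h1) hc)
        exact (interp_respects pure liftA2 Equiv equiv interpE a har).mp ha
    · intro ha
      exact ⟨r, ha, pure b, equiv.refl _, Or.inl (right_id b f r hf)⟩
  | @comm A B C f a b =>
    intro r
    constructor
    · rintro ⟨a', ha, b', hb, hc | hc⟩
      · exact ⟨b', hb, a', ha, Or.inr hc⟩
      · exact ⟨b', hb, a', ha, Or.inl hc⟩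
    · rintro ⟨b', hb, a', ha, hc | hc⟩
      · exact ⟨a', ha, b', hb, Or.inr hc⟩
      · exact ⟨a', ha, b', hb, Or.inl hc⟩
  | refl a => intro r; exact Iff.rfl
  | symm h ih => intro r; exact (ih r).symm
  | trans h1 h2 ih1 ih2 => intro r; exact (ih1 r).trans (ih2 r)

end
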